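/- Let f: L¹ → (−∞, ∞] be dilatation monotone, ‖·‖₁ lower semicontinuous, with lim_{|s|→∞}(f(s·1) + s) = ∞. Then the cash-additive hull ρ^f(X) = inf_{s∈ℝ}{f(X − s) − s} is ‖·‖₁ lower semicontinuous on L¹ and never takes the value −∞. -/

import Mathlib

open MeasureTheory Filter Topology

variable {Ω : Type*} [MeasurableSpace Ω]

/-- A finite measurable partition of `Ω` whose members have positive measure. -/
structure FinPartition (μ : Measure Ω) where
  parts : Finset (Set Ω)
  measSet : ∀ A ∈ parts, MeasurableSet A
  pairwiseDisj : ∀ A ∈ parts, ∀ B ∈ parts, A ≠ B → Disjoint A B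
  cover : ⋃ A ∈ parts, A = Set.univ
  pos : ∀ A ∈ parts, 0 < μ A

/-- Conditional expectation of `X` with respect to the finite partition `π`:
`E[X|π] = ∑_{A ∈ π} (∫_A X dμ / μ(A)) 1_A`. -/
noncomputable def pCondExp (μ : Measure Ω) (π : FinPartition μ) (X : Ω → ℝ) : Ω → ℝ :=
  fun ω => ∑ A ∈ π.parts, Set.indicator A (fun _ => (∫ x in A, X x ∂μ) / (μ A).toReal) ω

/-- A simple random variable. -/
def IsSimpleRV (X : Ω → ℝ) : Prop := Measurable X ∧ (Set.range X).Finite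

/-- Membership in the smallest ideal of `L¹` generated by `S`. -/
def MemIdeal (μ : Measure Ω) (S : Set (Ω → ℝ)) (X : Ω → ℝ) : Prop :=
  ∃ (n : ℕ) (Y : Fin n → Ω → ℝ) (l : Fin n → ℝ),
    (∀ i, Y i ∈ S) ∧ (∀ i, 0 ≤ l i) ∧ ∀ᵐ ω ∂μ, |X ω| ≤ ∑ i, l i * |Y i ω|

/-- Dilatation monotonicity of `ρ` on `𝓧`. -/
def DilMono (μ : Measure Ω) (𝓧 : Set (Ω → ℝ)) (ρ : (Ω → ℝ) → EReal) : Prop :=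
  ∀ X ∈ 𝓧, ∀ π : FinPartition μ, ρ (pCondExp μ π X) ≤ ρ X

/-- The Fatou property of `ρ` on `𝓧`. -/
def FatouProp (μ : Measure Ω) (𝓧 : Set (Ω → ℝ)) (ρ : (Ω → ℝ) → EReal) : Prop :=
  ∀ (Xn : ℕ → Ω → ℝ) (X : Ω → ℝ), (∀ n, Xn n ∈ 𝓧) → X ∈ 𝓧 →
    (∀ᵐ ω ∂μ, Tendsto (fun n => Xn n ω) atTop (nhds (X ω))) →
    (∃ Y, MemIdeal μ 𝓧 Y ∧ ∀ᵐ ω ∂μ, ∀ n, |Xn n ω| ≤ Y ω) →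
    ρ X ≤ liminf (fun n => ρ (Xn n)) atTop

/-- Convergence of a net in the `σ(L¹, 𝓛)` topology. -/
def TendstoWeakSimple (μ : Measure Ω) {ι : Type*} (l : Filter ι)
    (Xn : ι → Ω → ℝ) (X : Ω → ℝ) : Prop :=
  ∀ Z : Ω → ℝ, IsSimpleRV Z →
    Tendsto (fun i => ∫ ω, Xn i ω * Z ω ∂μ) l (nhds (∫ ω, X ω * Z ω ∂μ))

/-- The extension `ρ̄(X) = sup_{π ∈ Π} ρ(E[X|π])`. -/
noncomputable def rhoBar (μ : Measure Ω) (ρ : (Ω → ℝ) → EReal) (X : Ω → ℝ) : EReal :=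
  ⨆ π : FinPartition μ, ρ (pCondExp μ π X)

/-- The conjugate `ρ^#(Y) = sup_{X ∈ 𝓛} { E[XY] - ρ(X) }`. -/
noncomputable def sharp (μ : Measure Ω) (ρ : (Ω → ℝ) → EReal) (Y : Ω → ℝ) : EReal :=
  ⨆ X : {X : Ω → ℝ // IsSimpleRV X}, (((∫ ω, X.1 ω * Y ω ∂μ : ℝ) : EReal) - ρ X.1)

/-!
Dilatation monotonicity for the trivial partition gives `f (E[X]) ≤ f X`, hence
`f (X - t) - t ≥ g (E[X] - t) - E[X]` with `g s = f s + s`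
(a real `s` standing for the constant function). The function `g` is bounded below:
it is coercive, and on a compact interval `s ↦ f s` is lower semicontinuous and never `⊥`.
So `ρ^f X ≥ inf g - E[X] > ⊥`. For lower semicontinuity, the same estimate together with
coercivity keeps the shifts `t` that nearly attain `ρ^f (Xₙ)` in a bounded set, since `E[Xₙ]`
converges; along a subsequence `tₙ → a`, and lower semicontinuity of `f` at `X - a` gives
`ρ^f X ≤ f (X - a) - a ≤ liminf ρ^f (Xₙ)`.
-/

theorem lowerSemicontinuous_of_le_liminf_seq {α γ : Type*} [TopologicalSpace α]
    [FirstCountableTopology α] [CompleteLinearOrder γ] {g : α → γ}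
    (h : ∀ (u : ℕ → α) (x : α), Tendsto u atTop (𝓝 x) →
      g x ≤ liminf (fun n => g (u n)) atTop) :
    LowerSemicontinuous g := by
  intro x y hy
  by_contra hnot
  obtain ⟨u, hu, hle⟩ := exists_seq_forall_of_frequently (not_eventually.mp hnot)
  exact (hy.trans_le ((h u x hu).trans (liminf_le_of_le (by isBoundedDefault)
    fun b hb => hb.exists.elim fun n hn => hn.trans (not_lt.mp (hle n))))).false

theorem IsCompact.exists_forall_coe_le_of_lowerSemicontinuousOn {α : Type*}
    [TopologicalSpace α] {g : α → EReal} {K : Set α} (hK : IsCompact K)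
    (hg : LowerSemicontinuousOn g K) (hbot : ∀ x ∈ K, g x ≠ ⊥) :
    ∃ L : ℝ, ∀ x ∈ K, (L : EReal) ≤ g x := by
  rcases K.eq_empty_or_nonempty with rfl | hne
  · exact ⟨0, by simp⟩
  obtain ⟨a, ha, hmin⟩ := hg.exists_isMinOn hne hK
  exact ⟨(g a).toReal, fun x hx => (EReal.coe_toReal_le (hbot a ha)).trans (hmin hx)⟩

theorem exists_forall_coe_le_add_of_lowerSemicontinuous {g : ℝ → EReal}
    (hg : LowerSemicontinuous g) (hbot : ∀ s, g s ≠ ⊥) {M N : ℝ}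
    (hN : ∀ s : ℝ, N ≤ |s| → (M : EReal) ≤ g s + s) :
    ∃ L : ℝ, ∀ s : ℝ, (L : EReal) ≤ g s + s := by
  obtain ⟨L₀, hL₀⟩ :=
    (isCompact_Icc (a := -N) (b := N)).exists_forall_coe_le_of_lowerSemicontinuousOn
      (hg.lowerSemicontinuousOn _) fun s _ => hbot s
  refine ⟨min M (L₀ - N), fun s => ?_⟩
  rcases le_or_gt N |s| with hs | hs
  · exact (EReal.coe_le_coe_iff.mpr (min_le_left _ _)).trans (hN s hs)
  · have hsN : -N ≤ s := (abs_lt.mp hs).1.le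
    calc ((min M (L₀ - N) : ℝ) : EReal) ≤ ((L₀ + s : ℝ) : EReal) :=
          EReal.coe_le_coe_iff.mpr ((min_le_right _ _).trans (by linarith))
      _ ≤ g s + s := by
          rw [EReal.coe_add]
          exact add_le_add_left (hL₀ s (abs_le.mp hs.le)) _

def TendstoInL1 (μ : Measure Ω) {ι : Type*} (l : Filter ι) (Xn : ι → Ω → ℝ) (X : Ω → ℝ) :
    Prop :=
  Tendsto (fun i => ∫ ω, |Xn i ω - X ω| ∂μ) l (𝓝 0)

def L1LowerSemicontinuous (μ : Measure Ω) (f : (Ω → ℝ) → EReal) : Prop :=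
  ∀ (Xn : ℕ → Ω → ℝ) (X : Ω → ℝ), (∀ n, Integrable (Xn n) μ) → Integrable X μ →
    TendstoInL1 μ atTop Xn X → f X ≤ liminf (fun n => f (Xn n)) atTop

noncomputable def cashHull (f : (Ω → ℝ) → EReal) (X : Ω → ℝ) : EReal :=
  ⨅ t : ℝ, f (fun ω => X ω - t) - (t : EReal)

noncomputable def FinPartition.univ (μ : Measure Ω) [NeZero μ] : FinPartition μ where
  parts := {Set.univ}
  measSet := by simp
  pairwiseDisj := by simp
  cover := by simp
  pos := by simp [NeZero.ne μ]

theorem pCondExp_univ (μ : Measure Ω) [IsProbabilityMeasure μ] (X : Ω → ℝ) :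
    pCondExp μ (FinPartition.univ μ) X = fun _ => ∫ ω, X ω ∂μ := by
  funext ω
  simp [pCondExp, FinPartition.univ]

section L1

variable {μ : Measure Ω} {ι : Type*} {l : Filter ι} {Xn : ι → Ω → ℝ} {X : Ω → ℝ}

theorem TendstoInL1.comp {κ : Type*} {l' : Filter κ} {φ : κ → ι}
    (h : TendstoInL1 μ l Xn X) (hφ : Tendsto φ l' l) :
    TendstoInL1 μ l' (fun k => Xn (φ k)) X := by
  unfold TendstoInL1 at *
  exact h.comp hφ

theorem TendstoInL1.tendsto_integral (hXn : ∀ i, Integrable (Xn i) μ) (hX : Integrable X μ)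
    (h : TendstoInL1 μ l Xn X) :
    Tendsto (fun i => ∫ ω, Xn i ω ∂μ) l (𝓝 (∫ ω, X ω ∂μ)) := by
  rw [tendsto_iff_dist_tendsto_zero]
  refine squeeze_zero (fun _ => dist_nonneg) (fun i => ?_) h
  rw [Real.dist_eq, ← integral_sub (hXn i) hX]
  exact abs_integral_le_integral_abs

theorem TendstoInL1.sub_const [IsFiniteMeasure μ] (hXn : ∀ i, Integrable (Xn i) μ)
    (hX : Integrable X μ) (h : TendstoInL1 μ l Xn X) {t : ι → ℝ} {a : ℝ}
    (ht : Tendsto t l (𝓝 a)) :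
    TendstoInL1 μ l (fun i ω => Xn i ω - t i) (fun ω => X ω - a) := by
  have hbound : ∀ i, ∫ ω, |(Xn i ω - t i) - (X ω - a)| ∂μ ≤
      ∫ ω, |Xn i ω - X ω| ∂μ + μ.real Set.univ * |t i - a| := by
    intro i
    calc ∫ ω, |(Xn i ω - t i) - (X ω - a)| ∂μ
        ≤ ∫ ω, (|Xn i ω - X ω| + |t i - a|) ∂μ := by
          refine integral_mono (((hXn i).sub (integrable_const _)).sub
            (hX.sub (integrable_const _))).abs
            (((hXn i).sub hX).abs.add (integrable_const _)) fun ω => ?_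
          rw [show Xn i ω - t i - (X ω - a) = (Xn i ω - X ω) - (t i - a) by ring]
          exact abs_sub _ _
      _ = ∫ ω, |Xn i ω - X ω| ∂μ + μ.real Set.univ * |t i - a| := by
          rw [integral_add (f := fun ω => |Xn i ω - X ω|) ((hXn i).sub hX).abs
            (integrable_const _), integral_const,
            smul_eq_mul]
  have hlim : Tendsto (fun i => ∫ ω, |Xn i ω - X ω| ∂μ + μ.real Set.univ * |t i - a|) l
      (𝓝 0) := by
    simpa using h.add (((ht.sub_const a).abs).const_mul (μ.real Set.univ))
  exact squeeze_zero (fun _ => integral_nonneg fun _ => abs_nonneg _) hbound hlim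

theorem tendstoInL1_const [IsFiniteMeasure μ] {u : ι → ℝ} {a : ℝ} (hu : Tendsto u l (𝓝 a)) :
    TendstoInL1 μ l (fun i _ => u i) (fun _ => a) := by
  unfold TendstoInL1
  simpa using ((hu.sub_const a).abs).const_mul (μ.real Set.univ)

end L1

section CashHull

variable {μ : Measure Ω} {f : (Ω → ℝ) → EReal}

theorem DilMono.apply_const_integral_le [IsProbabilityMeasure μ]
    (hdil : DilMono μ {X | Integrable X μ} f) {X : Ω → ℝ} (hX : Integrable X μ) :
    f (fun _ => ∫ ω, X ω ∂μ) ≤ f X := by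
  simpa only [pCondExp_univ] using hdil X hX (FinPartition.univ μ)

theorem DilMono.apply_const_integral_sub_le [IsProbabilityMeasure μ]
    (hdil : DilMono μ {X | Integrable X μ} f) {X : Ω → ℝ} (hX : Integrable X μ) (t : ℝ) :
    f (fun _ => ∫ ω, X ω ∂μ - t) ≤ f (fun ω => X ω - t) := by
  have h := hdil.apply_const_integral_le (X := fun ω => X ω - t) (hX.sub (integrable_const t))
  simpa [integral_sub hX (integrable_const t)] using h

theorem lowerSemicontinuous_apply_const [IsFiniteMeasure μ] (hlsc : L1LowerSemicontinuous μ f) :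
    LowerSemicontinuous fun s : ℝ => f (fun _ : Ω => s) :=
  lowerSemicontinuous_of_le_liminf_seq fun _ _ hu =>
    hlsc _ _ (fun _ => integrable_const _) (integrable_const _) (tendstoInL1_const hu)

theorem coe_sub_integral_le_shift [IsProbabilityMeasure μ]
    (hdil : DilMono μ {X | Integrable X μ} f) {L : ℝ}
    (hL : ∀ s : ℝ, (L : EReal) ≤ f (fun _ => s) + s) {X : Ω → ℝ} (hX : Integrable X μ)
    (t : ℝ) :
    ((L - ∫ ω, X ω ∂μ : ℝ) : EReal) ≤ f (fun ω => X ω - t) - t := by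
  set m := ∫ ω, X ω ∂μ
  rw [EReal.le_sub_iff_add_le (.inl (EReal.coe_ne_bot t)) (.inl (EReal.coe_ne_top t))]
  calc ((L - m : ℝ) : EReal) + t = (L : EReal) - ((m - t : ℝ) : EReal) := by
        norm_cast; ring
    _ ≤ f (fun _ => m - t) :=
        (EReal.sub_le_iff_le_add (.inl (EReal.coe_ne_bot _)) (.inl (EReal.coe_ne_top _))).2
          (hL _)
    _ ≤ f (fun ω => X ω - t) := hdil.apply_const_integral_sub_le hX t

theorem cashHull_ne_bot [IsProbabilityMeasure μ] (hbot : ∀ X : Ω → ℝ, f X ≠ ⊥)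
    (hdil : DilMono μ {X | Integrable X μ} f) (hlsc : L1LowerSemicontinuous μ f) {M N : ℝ}
    (hN : ∀ s : ℝ, N ≤ |s| → (M : EReal) ≤ f (fun _ => s) + s) {X : Ω → ℝ}
    (hX : Integrable X μ) :
    cashHull f X ≠ ⊥ := by
  obtain ⟨L, hL⟩ := exists_forall_coe_le_add_of_lowerSemicontinuous
    (lowerSemicontinuous_apply_const hlsc) (fun _ => hbot _) hN
  exact ne_bot_of_le_ne_bot (EReal.coe_ne_bot _) (le_iInf (coe_sub_integral_le_shift hdil hL hX))

theorem abs_integral_sub_lt_of_shift_lt [IsProbabilityMeasure μ]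
    (hdil : DilMono μ {X | Integrable X μ} f) {M N : ℝ}
    (hN : ∀ s : ℝ, N ≤ |s| → (M : EReal) ≤ f (fun _ => s) + s) {X : Ω → ℝ}
    (hX : Integrable X μ) {c t : ℝ} (ht : f (fun ω => X ω - t) - t < c)
    (hM : c + ∫ ω, X ω ∂μ ≤ M) :
    |∫ ω, X ω ∂μ - t| < N := by
  set m := ∫ ω, X ω ∂μ
  by_contra! hlarge
  have hlt : f (fun ω => X ω - t) < ((c + t : ℝ) : EReal) := by
    rw [EReal.coe_add]
    exact (EReal.sub_lt_iff (.inl (EReal.coe_ne_bot t)) (.inl (EReal.coe_ne_top t))).1 ht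
  have : (M : EReal) < M := calc
    (M : EReal) ≤ f (fun _ => m - t) + ((m - t : ℝ) : EReal) := hN _ hlarge
    _ ≤ f (fun ω => X ω - t) + ((m - t : ℝ) : EReal) :=
        add_le_add_left (hdil.apply_const_integral_sub_le hX t) _
    _ < ((c + t : ℝ) : EReal) + ((m - t : ℝ) : EReal) := EReal.add_lt_add_right_coe hlt _
    _ ≤ M := by norm_cast; linarith
  exact this.false

theorem cashHull_le_of_tendstoInL1 [IsFiniteMeasure μ] (hlsc : L1LowerSemicontinuous μ f)
    {Xn : ℕ → Ω → ℝ} {X : Ω → ℝ} (hXn : ∀ n, Integrable (Xn n) μ) (hX : Integrable X μ)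
    (hconv : TendstoInL1 μ atTop Xn X) {t : ℕ → ℝ} {a c : ℝ} (ht : Tendsto t atTop (𝓝 a))
    (hle : ∀ n, f (fun ω => Xn n ω - t n) ≤ ((c + t n : ℝ) : EReal)) :
    cashHull f X ≤ c := by
  have hfa : f (fun ω => X ω - a) ≤ ((c + a : ℝ) : EReal) := calc
    f (fun ω => X ω - a) ≤ liminf (fun n => f (fun ω => Xn n ω - t n)) atTop :=
        hlsc _ _ (fun n => (hXn n).sub (integrable_const _)) (hX.sub (integrable_const _))
          (hconv.sub_const hXn hX ht)
    _ ≤ liminf (fun n => ((c + t n : ℝ) : EReal)) atTop :=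
        liminf_le_liminf (Eventually.of_forall hle)
    _ = ((c + a : ℝ) : EReal) := (EReal.tendsto_coe.mpr (ht.const_add c)).liminf_eq
  rw [EReal.coe_add] at hfa
  exact (iInf_le _ a).trans (EReal.sub_le_of_le_add hfa)

theorem cashHull_l1LowerSemicontinuous [IsProbabilityMeasure μ]
    (hdil : DilMono μ {X | Integrable X μ} f) (hlsc : L1LowerSemicontinuous μ f)
    (hcoercive : ∀ M : ℝ, ∃ N : ℝ, ∀ s : ℝ, N ≤ |s| → (M : EReal) ≤ f (fun _ => s) + s) :
    L1LowerSemicontinuous μ (cashHull f) := by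
  intro Xn X hXn hX hconv
  rw [← EReal.le_of_forall_lt_iff_le]
  intro c hc
  set m := ∫ ω, X ω ∂μ
  have hmean : ∀ᶠ n in atTop, dist (∫ ω, Xn n ω ∂μ) m < 1 :=
    (hconv.tendsto_integral hXn hX).eventually (Metric.ball_mem_nhds _ one_pos)
  obtain ⟨N, hN⟩ := hcoercive (c + (m + 1))
  -- Coercivity confines the near-optimal shifts of `Xₙ` to a bounded set.
  have hshifts : ∃ᶠ n in atTop, ∃ t : ℝ, dist t m < N + 1 ∧
      f (fun ω => Xn n ω - t) ≤ ((c + t : ℝ) : EReal) := by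
    refine ((frequently_lt_of_liminf_lt (by isBoundedDefault) hc).and_eventually hmean).mono ?_
    rintro n ⟨hlt, hdist⟩
    obtain ⟨t, ht⟩ := iInf_lt_iff.mp hlt
    rw [Real.dist_eq] at hdist
    have hshift := abs_integral_sub_lt_of_shift_lt hdil hN (hXn n) ht
      (by linarith [(abs_lt.mp hdist).2])
    refine ⟨t, ?_, ?_⟩
    · rw [Real.dist_eq]
      calc |t - m| ≤ |∫ ω, Xn n ω ∂μ - t| + |∫ ω, Xn n ω ∂μ - m| := by
            rw [abs_sub_comm _ t]; exact abs_sub_le _ _ _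
        _ < N + 1 := add_lt_add hshift hdist
    · rw [EReal.coe_add]
      exact ((EReal.sub_lt_iff (.inl (EReal.coe_ne_bot t)) (.inl (EReal.coe_ne_top t))).1 ht).le
  obtain ⟨φ, hφ, hφt⟩ := extraction_of_frequently_atTop hshifts
  choose t htm hft using hφt
  obtain ⟨a, -, ψ, hψ, hta⟩ := tendsto_subseq_of_bounded Metric.isBounded_ball htm
  exact cashHull_le_of_tendstoInL1 hlsc (fun _ => hXn _) hX
    (hconv.comp (hφ.comp hψ).tendsto_atTop) hta fun k => hft (ψ k)

end CashHull

/-- If `f : L¹ → (-∞,∞]` is dilatation monotone, `‖·‖₁` lower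
semicontinuous and coercive, then the cash-additive hull
`ρ^f(X) = inf_s {f(X - s) - s}` is `‖·‖₁` lower semicontinuous on `L¹` and never `-∞`. -/
theorem stmt13 (μ : Measure Ω) [IsProbabilityMeasure μ]
    (f : (Ω → ℝ) → EReal) (hbot : ∀ X : Ω → ℝ, f X ≠ ⊥)
    (hdil : ∀ X : Ω → ℝ, Integrable X μ → ∀ π : FinPartition μ,
      f (pCondExp μ π X) ≤ f X)
    (hlsc : ∀ (Xn : ℕ → Ω → ℝ) (X : Ω → ℝ), (∀ n, Integrable (Xn n) μ) →
      Integrable X μ →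
      Tendsto (fun n => ∫ ω, |Xn n ω - X ω| ∂μ) atTop (nhds 0) →
      f X ≤ liminf (fun n => f (Xn n)) atTop)
    (hcoercive : ∀ M : ℝ, ∃ N : ℝ, ∀ s : ℝ, N ≤ |s| →
      (M : EReal) ≤ f (fun _ => s) + (s : EReal)) :
    (∀ (Xn : ℕ → Ω → ℝ) (X : Ω → ℝ), (∀ n, Integrable (Xn n) μ) → Integrable X μ →
      Tendsto (fun n => ∫ ω, |Xn n ω - X ω| ∂μ) atTop (nhds 0) →
      (⨅ t : ℝ, f (fun ω => X ω - t) - (t : EReal)) ≤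
        liminf (fun n => ⨅ t : ℝ, f (fun ω => Xn n ω - t) - (t : EReal)) atTop) ∧
    (∀ X : Ω → ℝ, Integrable X μ →
      (⨅ t : ℝ, f (fun ω => X ω - t) - (t : EReal)) ≠ ⊥) := by
  obtain ⟨N, hN⟩ := hcoercive 0
  exact ⟨cashHull_l1LowerSemicontinuous hdil hlsc hcoercive,
    fun X hX => cashHull_ne_bot hbot hdil hlsc hN hX⟩
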